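/- arXiv:2303.06888 — 2 statements merged into one kernel-verified Lean document; each statement's English description precedes it below -/
import Mathlib

section
/- Let d ≥ 2 and 0 < δ < 1. There exists C > 0 such that for every integer N ≥ 2: Σ_{j∈ℤ, −δN ≤ j ≤ 0} Σ_{k∈ℤ, −δN ≤ k ≤ 0, k ≠ j} 2^{−j} 2^{−(d−1)j} 2^{−(d−1)k} ‖φ_j * ( φ_j(· − 2^{|j|+2N} e_1) φ_k(· − 2^{|k|+2N} e_1) sin²(2^N x_1) )‖_{L^d(ℝ^d)} ≤ C N 2^{−d(1−δ)N}. -/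
noncomputable section

open MeasureTheory Real Filter
open scoped FourierTransform ENNReal BigOperators

abbrev Eu (d : ℕ) : Type := EuclideanSpace ℝ (Fin d)

namespace Paper

/-- The first standard basis vector of `ℝ^d`. -/
def e1 (d : ℕ) : Eu d := (WithLp.equiv 2 (Fin d → ℝ)).symm fun i => if (i : ℕ) = 0 then 1 else 0

/-- The first coordinate of a point of `ℝ^d`. -/
def x1 {d : ℕ} (x : Eu d) : ℝ := (inner ℝ x (e1 d) : ℝ)

/-- Convolution of two complex valued functions on `ℝ^d`. -/
def conv {d : ℕ} (f g : Eu d → ℂ) : Eu d → ℂ := fun x => ∫ y, f y * g (x - y)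

/-- Partial derivative in the `i`-th coordinate direction. -/
def pd {d : ℕ} (i : Fin d) (f : Eu d → ℂ) : Eu d → ℂ :=
  fun x => fderiv ℝ f x (EuclideanSpace.single i 1)

/-- Real-valued version of `pd`. -/
def pdR {d : ℕ} (i : Fin d) (f : Eu d → ℝ) : Eu d → ℝ :=
  fun x => fderiv ℝ f x (EuclideanSpace.single i 1)

/-- Littlewood-Paley dilation `φ_j (x) = 2^{dj} φ_0 (2^j x)`. -/
def LP {d : ℕ} (φ0 : Eu d → ℂ) (j : ℤ) : Eu d → ℂ :=
  fun x => (((2 : ℝ) ^ ((d : ℤ) * j) : ℝ) : ℂ) * φ0 (((2 : ℝ) ^ j) • x)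

/-- The homogeneous Besov norm `‖f‖_{Ḃ^s_{p,1}}` (third index `q = 1`). -/
def besov {d : ℕ} (φ0 : Eu d → ℂ) (s : ℝ) (p : ℝ≥0∞) (f : Eu d → ℂ) : ℝ≥0∞ :=
  ∑' j : ℤ, ENNReal.ofReal ((2 : ℝ) ^ (s * (j : ℝ))) * eLpNorm (conv (LP φ0 j) f) p volume

/-- Besov norm of a real-valued function. -/
def besovR {d : ℕ} (φ0 : Eu d → ℂ) (s : ℝ) (p : ℝ≥0∞) (f : Eu d → ℝ) : ℝ≥0∞ :=
  besov φ0 s p (fun x => (f x : ℂ))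

/-- The set of integers `j` with `-δN ≤ j ≤ 0`. -/
def jSet (δ : ℝ) (N : ℕ) : Finset ℤ := Finset.Icc ⌈-(δ * (N : ℝ))⌉ 0

/-- The translation `2^{|j|+2N} e_1`. -/
def shift (d : ℕ) (N : ℕ) (j : ℤ) : Eu d := ((2 : ℝ) ^ (j.natAbs + 2 * N) : ℝ) • e1 d

/-- `R = (log N)⁻¹`. -/
def RN (N : ℕ) : ℝ := (Real.log N)⁻¹

/-- First component of the initial datum `u_{0,N}` (in dimension `d`). -/
def u0c (d : ℕ) (φ0 : Eu d → ℂ) (δ : ℝ) (N : ℕ) : Eu d → ℂ := fun x =>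
  ((RN N * (N : ℝ) ^ (-(1 : ℝ) / (d : ℝ)) * Real.sin ((2 : ℝ) ^ N * x1 x) : ℝ) : ℂ) *
    ∑ j ∈ jSet δ N, (((2 : ℝ) ^ (-((d : ℤ) - 1) * j) : ℝ) : ℂ) * LP φ0 j (x - shift d N j)

/-- The initial velocity field `u_{0,N}`. -/
def u0v (d : ℕ) (φ0 : Eu d → ℂ) (δ : ℝ) (N : ℕ) : Fin d → Eu d → ℂ :=
  fun l x => if (l : ℕ) = 0 then u0c d φ0 δ N x else 0

/-- Heat semigroup `e^{tΔ}` given by convolution with the Gaussian kernel. -/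
def heat {d : ℕ} (t : ℝ) (f : Eu d → ℂ) : Eu d → ℂ :=
  if t = 0 then f else fun x =>
    ∫ y, (((4 * Real.pi * t) ^ (-(d : ℝ) / 2) * Real.exp (-‖x - y‖ ^ 2 / (4 * t)) : ℝ) : ℂ) * f y

/-- Divergence of a vector field. -/
def divg {d : ℕ} (u : Fin d → Eu d → ℂ) : Eu d → ℂ := fun x => ∑ j, pd j (u j) x

/-- Real divergence. -/
def divgR {d : ℕ} (u : Fin d → Eu d → ℝ) : Eu d → ℝ := fun x => ∑ j, pdR j (u j) x

/-- The lattice point `k ∈ ℤ³` seen inside `ℝ³`. -/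
def kv (k : Fin 3 → ℤ) : Eu 3 := (WithLp.equiv 2 (Fin 3 → ℝ)).symm fun i => (k i : ℝ)

/-- The modulation space norm `‖f‖_{M_{3,1}}`. -/
def modNorm (χ : Eu 3 → ℂ) (f : Eu 3 → ℂ) : ℝ≥0∞ :=
  ∑' k : Fin 3 → ℤ, eLpNorm (𝓕⁻ fun ξ => χ (ξ - kv k) * 𝓕 f ξ) 3 volume

/-- Modulation norm of a vector field: sum over the components. -/
def modNormV (χ : Eu 3 → ℂ) (u : Fin 3 → Eu 3 → ℂ) : ℝ≥0∞ := ∑ i, modNorm χ (u i)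

/-- The hypotheses on the window function `χ` defining the modulation norm. -/
structure IsChi (χ : Eu 3 → ℂ) : Prop where
  smooth : ContDiff ℝ (⊤ : ℕ∞) χ
  compact : HasCompactSupport χ
  supp : Function.support χ ⊆ {ξ : Eu 3 | ∀ i : Fin 3, 0 ≤ ξ i ∧ ξ i < 2}
  sum : ∀ ξ : Eu 3, HasSum (fun k : Fin 3 → ℤ => χ (ξ - kv k)) 1

/-- The semigroup `e^{t𝓛}`, `𝓛 = μΔ + (μ+λ)∇div`, defined on the Fourier side. -/
def Lsemi (μ lam t : ℝ) (u : Fin 3 → Eu 3 → ℂ) : Fin 3 → Eu 3 → ℂ := fun i =>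
  𝓕⁻ fun ξ =>
    ((Real.exp (-(t * μ * ‖ξ‖ ^ 2)) : ℝ) : ℂ) *
        (𝓕 (u i) ξ - ((‖ξ‖ ^ 2 : ℝ) : ℂ)⁻¹ * ((ξ i : ℝ) : ℂ) * ∑ j, ((ξ j : ℝ) : ℂ) * 𝓕 (u j) ξ) +
      ((Real.exp (-(t * (2 * μ + lam) * ‖ξ‖ ^ 2)) : ℝ) : ℂ) * ((‖ξ‖ ^ 2 : ℝ) : ℂ)⁻¹ *
        ((ξ i : ℝ) : ℂ) * ∑ j, ((ξ j : ℝ) : ℂ) * 𝓕 (u j) ξ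

/-- The operator `𝓛 = μΔ + (μ+λ)∇div`. -/
def Lop (μ lam : ℝ) (u : Fin 3 → Eu 3 → ℂ) : Fin 3 → Eu 3 → ℂ := fun i x =>
  (μ : ℂ) * ∑ j, pd j (pd j (u i)) x + ((μ + lam : ℝ) : ℂ) * pd i (divg u) x

/-- Real-valued version of `𝓛`. -/
def LopR (μ lam : ℝ) (u : Fin 3 → Eu 3 → ℝ) : Fin 3 → Eu 3 → ℝ := fun i x =>
  μ * ∑ j, pdR j (pdR j (u i)) x + (μ + lam) * pdR i (divgR u) x

/-- The heat semigroup `e^{tκΔ}` on the Fourier side. -/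
def heatF (κ t : ℝ) (f : Eu 3 → ℂ) : Eu 3 → ℂ :=
  𝓕⁻ fun ξ => ((Real.exp (-(κ * t * ‖ξ‖ ^ 2)) : ℝ) : ℂ) * 𝓕 f ξ

/-- `(u·∇)v`. -/
def advect (u v : Fin 3 → Eu 3 → ℂ) : Fin 3 → Eu 3 → ℂ := fun i x => ∑ j, u j x * pd j (v i) x

/-- Deformation tensor `D(u)_{ij}`. -/
def Dten (u : Fin 3 → Eu 3 → ℂ) (i j : Fin 3) : Eu 3 → ℂ := fun x =>
  (pd i (u j) x + pd j (u i) x) / 2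

/-- The quadratic form `2μ tr(D(u)D(v)ᵀ) + λ div u · div v`. -/
def DD (μ lam : ℝ) (u v : Fin 3 → Eu 3 → ℂ) : Eu 3 → ℂ := fun x =>
  2 * (μ : ℂ) * ∑ i, ∑ j, Dten u i j x * Dten v i j x + (lam : ℂ) * divg u x * divg v x

end Paper
namespace Paper

/-- The first Picard iterate `U_1(t) = e^{t𝓛} u_0`. -/
def U1 (μ lam : ℝ) (u0 : Fin 3 → Eu 3 → ℂ) (t : ℝ) : Fin 3 → Eu 3 → ℂ := Lsemi μ lam t u0

/-- The first Picard iterate `P_1(t) = -∫_0^t div U_1(s) ds`. -/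
def P1 (μ lam : ℝ) (u0 : Fin 3 → Eu 3 → ℂ) (t : ℝ) : Eu 3 → ℂ := fun x =>
  -∫ s in (0 : ℝ)..t, divg (U1 μ lam u0 s) x

/-- The second Picard iterate `Θ_2`. -/
def Θ2 (μ lam κ : ℝ) (u0 : Fin 3 → Eu 3 → ℂ) (t : ℝ) : Eu 3 → ℂ := fun x =>
  ∫ s in (0 : ℝ)..t, heatF κ (t - s) (DD μ lam (U1 μ lam u0 s) (U1 μ lam u0 s)) x

/-- The second Picard iterate `U_2`. -/
def U2 (μ lam κ : ℝ) (u0 : Fin 3 → Eu 3 → ℂ) (t : ℝ) : Fin 3 → Eu 3 → ℂ := fun i x =>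
  ∫ s in (0 : ℝ)..t,
    Lsemi μ lam (t - s)
      (fun i' y =>
        -advect (U1 μ lam u0 s) (U1 μ lam u0 s) i' y - pd i' (Θ2 μ lam κ u0 s) y -
          P1 μ lam u0 s y * deriv (fun τ => U1 μ lam u0 τ i' y) s) i x

/-- The second Picard iterate `P_2`. -/
def P2 (μ lam κ : ℝ) (u0 : Fin 3 → Eu 3 → ℂ) (t : ℝ) : Eu 3 → ℂ := fun x =>
  -∫ s in (0 : ℝ)..t,
    (divg (U2 μ lam κ u0 s) x + divg (fun j y => P1 μ lam u0 s y * U1 μ lam u0 s j y) x)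

/-- The Picard expansion `(P_k, U_k, Θ_k)_{k ≥ 0}` associated with the data `(0, u_0, 0)`. -/
structure IsPicard (μ lam κ : ℝ) (u0 : Fin 3 → Eu 3 → ℂ) (P : ℕ → ℝ → Eu 3 → ℂ)
    (U : ℕ → ℝ → Fin 3 → Eu 3 → ℂ) (Θ : ℕ → ℝ → Eu 3 → ℂ) : Prop where
  hP0 : ∀ t, P 0 t = 0
  hU0 : ∀ t, U 0 t = 0
  hΘ0 : ∀ t, Θ 0 t = 0
  hΘ1 : ∀ t, Θ 1 t = 0
  hU1 : ∀ t, U 1 t = U1 μ lam u0 t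
  hP1 : ∀ t, P 1 t = P1 μ lam u0 t
  hΘ2 : ∀ t, Θ 2 t = Θ2 μ lam κ u0 t
  hU2 : ∀ t, U 2 t = U2 μ lam κ u0 t
  hP2 : ∀ t, P 2 t = P2 μ lam κ u0 t
  hPk : ∀ k, 3 ≤ k → ∀ t x, P k t x =
    -∫ s in (0 : ℝ)..t,
      (divg (U k s) x +
        ∑ k1 ∈ Finset.Ioo 0 k, divg (fun j y => P k1 s y * U (k - k1) s j y) x)
  hUk : ∀ k, 3 ≤ k → ∀ t i x, U k t i x =
    ∫ s in (0 : ℝ)..t,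
      Lsemi μ lam (t - s)
        (fun i' y =>
          -(∑ k1 ∈ Finset.Ioo 0 k, advect (U k1 s) (U (k - k1) s) i' y) -
            (∑ k1 ∈ Finset.Ioo 0 k, ∑ k2 ∈ Finset.Ioo 0 (k - k1),
              P (k - k1 - k2) s y * advect (U k1 s) (U k2 s) i' y) -
            pd i' (fun z => Θ k s z + ∑ k1 ∈ Finset.Ioo 0 k, P k1 s z * Θ (k - k1) s z) y -
            ∑ k1 ∈ Finset.Ioo 0 k, P k1 s y * deriv (fun τ => U (k - k1) τ i' y) s) i x
  hΘk : ∀ k, 3 ≤ k → ∀ t x, Θ k t x =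
    ∫ s in (0 : ℝ)..t,
      heatF κ (t - s)
        (fun y =>
          -(∑ k1 ∈ Finset.Ioo 0 k, ∑ j, U k1 s j y * pd j (Θ (k - k1) s) y) -
            (∑ k1 ∈ Finset.Ioo 0 k, ∑ k2 ∈ Finset.Ioo 0 (k - k1),
              P (k - k1 - k2) s y * ∑ j, U k1 s j y * pd j (Θ k2 s) y) -
            (∑ k1 ∈ Finset.Ioo 0 k, Θ k1 s y * divg (U (k - k1) s) y) -
            (∑ k1 ∈ Finset.Ioo 0 k, ∑ k2 ∈ Finset.Ioo 0 (k - k1),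
              P (k - k1 - k2) s y * Θ k1 s y * divg (U k2 s) y) -
            (∑ k1 ∈ Finset.Ioo 0 k, P k1 s y * deriv (fun τ => Θ (k - k1) τ y) s) +
            ∑ k1 ∈ Finset.Ioo 0 k, DD μ lam (U k1 s) (U (k - k1) s) y) x

end Paper

namespace Paper

section AuxLemmas

variable {d : ℕ}

lemma ofReal_norm_eq_coe_nnnorm {E : Type*} [NormedAddCommGroup E] (a : E) :
    ENNReal.ofReal ‖a‖ = (‖a‖₊ : ℝ≥0∞) := ENNReal.ofReal_eq_coe_nnreal _

lemma norm_LP (φ0 : Eu d → ℂ) (j : ℤ) (x : Eu d) :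
    ‖LP φ0 j x‖ = (2:ℝ) ^ ((d:ℤ)*j) * ‖φ0 (((2:ℝ)^j) • x)‖ := by
  rw [LP, norm_mul, Complex.norm_real, Real.norm_eq_abs, abs_of_pos (by positivity)]

lemma LP_continuous (φ0 : SchwartzMap (Eu d) ℂ) (j : ℤ) : Continuous (LP (⇑φ0) j) :=
  continuous_const.mul (φ0.continuous.comp (continuous_const_smul _))

lemma LP_norm_le_C0 {φ0 : SchwartzMap (Eu d) ℂ} {C0 : ℝ}
    (hC0 : ∀ x, ‖φ0 x‖ ≤ C0) {j : ℤ} (hj : j ≤ 0) (x : Eu d) :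
    ‖LP (⇑φ0) j x‖ ≤ C0 := by
  rw [norm_LP]
  have h1 : (2:ℝ) ^ ((d:ℤ)*j) ≤ 1 :=
    zpow_le_one_of_nonpos₀ one_le_two (mul_nonpos_of_nonneg_of_nonpos (by positivity) hj)
  have h2 : ‖φ0 (((2:ℝ)^j) • x)‖ ≤ C0 := hC0 _
  have h0 : (0:ℝ) ≤ ‖φ0 (((2:ℝ)^j) • x)‖ := norm_nonneg _
  nlinarith [ (norm_nonneg (φ0 (((2:ℝ)^j) • x))), (zpow_pos (by norm_num : (0:ℝ)<2) ((d:ℤ)*j)) ]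

lemma LP_norm_le_decay {φ0 : SchwartzMap (Eu d) ℂ} {m : ℕ} {C1 : ℝ}
    (hC1 : ∀ x, ‖x‖ ^ m * ‖φ0 x‖ ≤ C1) {j : ℤ} (hj : j ≤ 0)
    {x : Eu d} {r : ℝ} (hr : 1 ≤ r) (hx : r ≤ (2:ℝ)^j * ‖x‖) :
    ‖LP (⇑φ0) j x‖ ≤ C1 / r ^ m := by
  rw [norm_LP]
  set w := ((2:ℝ)^j) • x with hw
  have hnw : ‖w‖ = (2:ℝ)^j * ‖x‖ := by
    rw [hw, norm_smul, Real.norm_eq_abs, abs_of_pos (by positivity)]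
  have hrw : r ≤ ‖w‖ := by rw [hnw]; exact hx
  have hrpos : (0:ℝ) < r := lt_of_lt_of_le one_pos hr
  have hC1nn : 0 ≤ C1 := le_trans (by positivity) (hC1 w)
  have h1 : r ^ m ≤ ‖w‖ ^ m := pow_le_pow_left₀ hrpos.le hrw m
  have h2 : ‖φ0 w‖ ≤ C1 / r ^ m := by
    rw [le_div_iff₀ (by positivity)]
    calc ‖φ0 w‖ * r ^ m ≤ ‖φ0 w‖ * ‖w‖ ^ m := by
          exact mul_le_mul_of_nonneg_left h1 (norm_nonneg _)
      _ = ‖w‖ ^ m * ‖φ0 w‖ := mul_comm _ _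
      _ ≤ C1 := hC1 w
  have h3 : (2:ℝ) ^ ((d:ℤ)*j) ≤ 1 :=
    zpow_le_one_of_nonpos₀ one_le_two (mul_nonpos_of_nonneg_of_nonpos (by positivity) hj)
  calc (2:ℝ) ^ ((d:ℤ)*j) * ‖φ0 w‖ ≤ 1 * ‖φ0 w‖ :=
        mul_le_mul_of_nonneg_right h3 (norm_nonneg _)
    _ = ‖φ0 w‖ := one_mul _
    _ ≤ C1 / r ^ m := h2

lemma lintegral_LP (φ0 : SchwartzMap (Eu d) ℂ) (j : ℤ) :
    (∫⁻ x, (‖LP (⇑φ0) j x‖₊ : ℝ≥0∞)) = ∫⁻ x, (‖φ0 x‖₊ : ℝ≥0∞) := by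
  have hmeas : Measurable fun z : Eu d => (‖φ0 z‖₊ : ℝ≥0∞) :=
    measurable_enorm.comp φ0.continuous.measurable
  have hr : ((2:ℝ)^j) ≠ 0 := by positivity
  have hmap : Measure.map (((2:ℝ)^j) • ·) (volume : Measure (Eu d)) =
      ENNReal.ofReal |(((2:ℝ)^j) ^ Module.finrank ℝ (Eu d))⁻¹| • volume :=
    Measure.map_addHaar_smul _ hr
  have hcomp : (∫⁻ x, (‖φ0 (((2:ℝ)^j) • x)‖₊ : ℝ≥0∞)) =
      ENNReal.ofReal |(((2:ℝ)^j) ^ Module.finrank ℝ (Eu d))⁻¹| * ∫⁻ x, (‖φ0 x‖₊ : ℝ≥0∞) := by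
    rw [← lintegral_map hmeas (measurable_const_smul _), hmap, lintegral_smul_measure, smul_eq_mul]
  have hnorm : ∀ x : Eu d, (‖LP (⇑φ0) j x‖₊ : ℝ≥0∞) =
      ENNReal.ofReal ((2:ℝ) ^ ((d:ℤ)*j)) * (‖φ0 (((2:ℝ)^j) • x)‖₊ : ℝ≥0∞) := by
    intro x
    rw [← ofReal_norm_eq_coe_nnnorm, ← ofReal_norm_eq_coe_nnnorm, norm_LP,
      ENNReal.ofReal_mul (by positivity)]
  simp only [hnorm]
  rw [lintegral_const_mul' _ _ ENNReal.ofReal_ne_top, hcomp, ← mul_assoc,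
    ← ENNReal.ofReal_mul (by positivity)]
  have : (2:ℝ) ^ ((d:ℤ)*j) * |(((2:ℝ)^j) ^ Module.finrank ℝ (Eu d))⁻¹| = 1 := by
    rw [finrank_euclideanSpace_fin, abs_of_pos (by positivity), ← zpow_natCast ((2:ℝ)^j) d,
      ← zpow_mul, ← zpow_neg, ← zpow_add₀ (by norm_num : (2:ℝ) ≠ 0)]
    rw [show (d:ℤ)*j + -(j*d) = 0 by ring, zpow_zero]
  rw [this, ENNReal.ofReal_one, one_mul]

lemma eLpNorm_le_of_bounds {g : Eu d → ℂ} {n : ℕ} (hn : 1 ≤ n) {M : ℝ≥0∞}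
    (hpt : ∀ x, (‖g x‖₊ : ℝ≥0∞) ≤ M) (hI : (∫⁻ x, (‖g x‖₊ : ℝ≥0∞)) ≤ M) :
    eLpNorm g n volume ≤ M := by
  rcases eq_top_or_lt_top M with hM | hM
  · exact hM ▸ le_top
  have hn0 : ((n : ℝ≥0∞)) ≠ 0 := Nat.cast_ne_zero.mpr (by omega)
  have hnt : ((n : ℝ≥0∞)) ≠ ⊤ := by simp
  rw [eLpNorm_eq_lintegral_rpow_enorm_toReal hn0 hnt]
  have htr : ((n : ℝ≥0∞)).toReal = (n : ℝ) := by simp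
  rw [htr]
  have hpow : ∀ x, (‖g x‖₊ : ℝ≥0∞) ^ (n : ℝ) ≤ M ^ (n - 1) * (‖g x‖₊ : ℝ≥0∞) := by
    intro x
    rw [ENNReal.rpow_natCast]
    calc (‖g x‖₊ : ℝ≥0∞) ^ n = (‖g x‖₊ : ℝ≥0∞) ^ (n - 1) * (‖g x‖₊ : ℝ≥0∞) := by
          conv_lhs => rw [show n = (n - 1) + 1 by omega]
          rw [pow_succ]
      _ ≤ M ^ (n - 1) * (‖g x‖₊ : ℝ≥0∞) :=
          mul_le_mul_left (pow_le_pow_left' (hpt x) _) _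
  calc (∫⁻ x, (‖g x‖₊ : ℝ≥0∞) ^ (n : ℝ)) ^ (1 / (n : ℝ))
      ≤ (∫⁻ x, M ^ (n - 1) * (‖g x‖₊ : ℝ≥0∞)) ^ (1 / (n : ℝ)) := by
        exact ENNReal.rpow_le_rpow (lintegral_mono hpow) (by positivity)
    _ = (M ^ (n - 1) * ∫⁻ x, (‖g x‖₊ : ℝ≥0∞)) ^ (1 / (n : ℝ)) := by
        rw [lintegral_const_mul' _ _ (by simp [hM.ne])]
    _ ≤ (M ^ (n - 1) * M) ^ (1 / (n : ℝ)) :=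
        ENNReal.rpow_le_rpow (mul_le_mul_right hI _) (by positivity)
    _ = (M ^ n) ^ (1 / (n : ℝ)) := by rw [← pow_succ, show (n-1)+1 = n by omega]
    _ = M := by
        rw [← ENNReal.rpow_natCast M n, ← ENNReal.rpow_mul,
          mul_one_div, div_self (by exact_mod_cast (by omega : n ≠ 0) : (n:ℝ) ≠ 0),
          ENNReal.rpow_one]

lemma pair_bound (φ0 : SchwartzMap (Eu d) ℂ) (hd1 : 1 ≤ d)
    {m : ℕ} {C0 C1 A0 : ℝ}
    (hC0 : ∀ x, ‖φ0 x‖ ≤ C0)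
    (hC1 : ∀ x, ‖x‖ ^ m * ‖φ0 x‖ ≤ C1)
    (hA0 : A0 = ∫ x, ‖φ0 x‖)
    {j k : ℤ} (hj : j ≤ 0) (hk : k ≤ 0)
    {a b : Eu d} {r : ℝ} (hr : 1 ≤ r)
    (hsepj : r ≤ (2:ℝ)^j * (‖a - b‖ / 2))
    (hsepk : r ≤ (2:ℝ)^k * (‖a - b‖ / 2))
    (s : Eu d → ℂ) (hs : Continuous s) (hs1 : ∀ x, ‖s x‖ ≤ 1) :
    eLpNorm (conv (LP (⇑φ0) j) fun x => LP (⇑φ0) j (x - a) * LP (⇑φ0) k (x - b) * s x)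
      d volume ≤ ENNReal.ofReal (A0 * (2*C0 + 2*A0) * (C1 / r ^ m)) := by
  have hC0nn : 0 ≤ C0 := le_trans (norm_nonneg _) (hC0 0)
  have hC1nn : 0 ≤ C1 := le_trans (by positivity) (hC1 0)
  have hA0nn : 0 ≤ A0 := hA0 ▸ integral_nonneg (fun x => norm_nonneg _)
  set ε : ℝ := C1 / r ^ m with hε
  have hεnn : 0 ≤ ε := by positivity
  set F : Eu d → ℂ := fun x => LP (⇑φ0) j (x - a) * LP (⇑φ0) k (x - b) * s x with hF
  have hFc : Continuous F := by
    exact (((LP_continuous φ0 j).comp (continuous_id.sub continuous_const)).mul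
      ((LP_continuous φ0 k).comp (continuous_id.sub continuous_const))).mul hs
  -- pointwise decay bound on F
  have hFpt : ∀ x, ‖F x‖ ≤ ε * (‖LP (⇑φ0) j (x - a)‖ + ‖LP (⇑φ0) k (x - b)‖) := by
    intro x
    have hnormF : ‖F x‖ = ‖LP (⇑φ0) j (x - a)‖ * ‖LP (⇑φ0) k (x - b)‖ * ‖s x‖ := by
      rw [hF]; simp [norm_mul]
    set P := ‖LP (⇑φ0) j (x - a)‖ with hP
    set Q := ‖LP (⇑φ0) k (x - b)‖ with hQ
    have hPnn : 0 ≤ P := norm_nonneg _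
    have hQnn : 0 ≤ Q := norm_nonneg _
    have hS1 : ‖s x‖ ≤ 1 := hs1 x
    have hSnn : 0 ≤ ‖s x‖ := norm_nonneg _
    have htri : ‖a - b‖ ≤ ‖x - a‖ + ‖x - b‖ := by
      have : a - b = (x - b) - (x - a) := by abel
      rw [this]
      exact (norm_sub_le _ _).trans (by rw [add_comm])
    rcases le_or_gt (‖a - b‖ / 2) ‖x - a‖ with hcase | hcase
    · have hxa : r ≤ (2:ℝ)^j * ‖x - a‖ := by
        refine le_trans hsepj ?_
        exact mul_le_mul_of_nonneg_left hcase (by positivity)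
      have hPε : P ≤ ε := LP_norm_le_decay hC1 hj hr hxa
      rw [hnormF]
      calc P * Q * ‖s x‖ ≤ P * Q * 1 :=
            mul_le_mul_of_nonneg_left hS1 (mul_nonneg hPnn hQnn)
        _ = P * Q := mul_one _
        _ ≤ ε * Q := mul_le_mul_of_nonneg_right hPε hQnn
        _ ≤ ε * (P + Q) := by nlinarith
    · have hxb : r ≤ (2:ℝ)^k * ‖x - b‖ := by
        have hb2 : ‖a - b‖ / 2 ≤ ‖x - b‖ := by linarith
        refine le_trans hsepk ?_
        exact mul_le_mul_of_nonneg_left hb2 (by positivity)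
      have hQε : Q ≤ ε := LP_norm_le_decay hC1 hk hr hxb
      rw [hnormF]
      calc P * Q * ‖s x‖ ≤ P * Q * 1 :=
            mul_le_mul_of_nonneg_left hS1 (mul_nonneg hPnn hQnn)
        _ = P * Q := mul_one _
        _ ≤ P * ε := mul_le_mul_of_nonneg_left hQε hPnn
        _ = ε * P := mul_comm _ _
        _ ≤ ε * (P + Q) := by nlinarith
  have hFsup : ∀ x, ‖F x‖ ≤ ε * (2 * C0) := by
    intro x
    refine (hFpt x).trans ?_
    have h1 : ‖LP (⇑φ0) j (x - a)‖ ≤ C0 := LP_norm_le_C0 hC0 hj _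
    have h2 : ‖LP (⇑φ0) k (x - b)‖ ≤ C0 := LP_norm_le_C0 hC0 hk _
    nlinarith
  -- integral facts
  have hφint : Integrable ⇑φ0 := φ0.integrable
  have hA0e : (∫⁻ x, (‖φ0 x‖₊ : ℝ≥0∞)) = ENNReal.ofReal A0 := by
    rw [hA0, ofReal_integral_norm_eq_lintegral_enorm hφint]
    rfl
  have hALPj : (∫⁻ x, (‖LP (⇑φ0) j x‖₊ : ℝ≥0∞)) = ENNReal.ofReal A0 := by
    rw [lintegral_LP, hA0e]
  have hALPk : (∫⁻ x, (‖LP (⇑φ0) k x‖₊ : ℝ≥0∞)) = ENNReal.ofReal A0 := by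
    rw [lintegral_LP, hA0e]
  -- L¹ bound for F
  have hmeasj : Measurable fun z : Eu d => (‖LP (⇑φ0) j (z - a)‖₊ : ℝ≥0∞) :=
    measurable_enorm.comp
      (((LP_continuous φ0 j).comp (continuous_id.sub continuous_const)).measurable)
  have hFL1 : (∫⁻ z, (‖F z‖₊ : ℝ≥0∞)) ≤ ENNReal.ofReal ε * (ENNReal.ofReal A0 + ENNReal.ofReal A0) := by
    have hptF : ∀ z, (‖F z‖₊ : ℝ≥0∞) ≤ ENNReal.ofReal ε *
        ((‖LP (⇑φ0) j (z - a)‖₊ : ℝ≥0∞) + (‖LP (⇑φ0) k (z - b)‖₊ : ℝ≥0∞)) := by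
      intro z
      rw [← ofReal_norm_eq_coe_nnnorm, ← ofReal_norm_eq_coe_nnnorm,
        ← ofReal_norm_eq_coe_nnnorm, ← ENNReal.ofReal_add (norm_nonneg _) (norm_nonneg _),
        ← ENNReal.ofReal_mul hεnn]
      exact ENNReal.ofReal_le_ofReal (hFpt z)
    calc (∫⁻ z, (‖F z‖₊ : ℝ≥0∞))
        ≤ ∫⁻ z, ENNReal.ofReal ε *
            ((‖LP (⇑φ0) j (z - a)‖₊ : ℝ≥0∞) + (‖LP (⇑φ0) k (z - b)‖₊ : ℝ≥0∞)) :=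
          lintegral_mono hptF
      _ = ENNReal.ofReal ε *
            ((∫⁻ z, (‖LP (⇑φ0) j (z - a)‖₊ : ℝ≥0∞)) + ∫⁻ z, (‖LP (⇑φ0) k (z - b)‖₊ : ℝ≥0∞)) := by
          rw [lintegral_const_mul' _ _ ENNReal.ofReal_ne_top, lintegral_add_left hmeasj]
      _ = ENNReal.ofReal ε * (ENNReal.ofReal A0 + ENNReal.ofReal A0) := by
          rw [lintegral_sub_right_eq_self (fun z => (‖LP (⇑φ0) j z‖₊ : ℝ≥0∞)) a,
            lintegral_sub_right_eq_self (fun z => (‖LP (⇑φ0) k z‖₊ : ℝ≥0∞)) b,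
            hALPj, hALPk]
  -- pointwise bound for the convolution
  have hcpt : ∀ x, (‖conv (LP (⇑φ0) j) F x‖₊ : ℝ≥0∞) ≤
      ∫⁻ y, (‖LP (⇑φ0) j y‖₊ : ℝ≥0∞) * (‖F (x - y)‖₊ : ℝ≥0∞) := by
    intro x
    refine le_trans (enorm_integral_le_lintegral_enorm _) (le_of_eq ?_)
    congr 1
    ext y
    rw [enorm_mul]
    rfl
  set M : ℝ≥0∞ := ENNReal.ofReal (A0 * (2*C0 + 2*A0) * ε) with hM
  have hptM : ∀ x, (‖conv (LP (⇑φ0) j) F x‖₊ : ℝ≥0∞) ≤ M := by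
    intro x
    refine (hcpt x).trans ?_
    calc (∫⁻ y, (‖LP (⇑φ0) j y‖₊ : ℝ≥0∞) * (‖F (x - y)‖₊ : ℝ≥0∞))
        ≤ ∫⁻ y, (‖LP (⇑φ0) j y‖₊ : ℝ≥0∞) * ENNReal.ofReal (ε * (2 * C0)) := by
          refine lintegral_mono fun y => mul_le_mul_right ?_ _
          rw [← ofReal_norm_eq_coe_nnnorm]
          exact ENNReal.ofReal_le_ofReal (hFsup _)
      _ = ENNReal.ofReal A0 * ENNReal.ofReal (ε * (2 * C0)) := by
          rw [lintegral_mul_const' _ _ ENNReal.ofReal_ne_top, hALPj]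
      _ ≤ M := by
          rw [hM, ← ENNReal.ofReal_mul hA0nn]
          apply ENNReal.ofReal_le_ofReal
          nlinarith [mul_nonneg (mul_nonneg hA0nn hA0nn) hεnn, mul_nonneg (mul_nonneg hA0nn hC0nn) hεnn]
  have hIM : (∫⁻ x, (‖conv (LP (⇑φ0) j) F x‖₊ : ℝ≥0∞)) ≤ M := by
    have hswap : (∫⁻ x, ∫⁻ y, (‖LP (⇑φ0) j y‖₊ : ℝ≥0∞) * (‖F (x - y)‖₊ : ℝ≥0∞)) =
        ∫⁻ y, ∫⁻ x, (‖LP (⇑φ0) j y‖₊ : ℝ≥0∞) * (‖F (x - y)‖₊ : ℝ≥0∞) := by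
      refine lintegral_lintegral_swap ?_
      refine Measurable.aemeasurable ?_
      exact ((measurable_enorm.comp
          ((LP_continuous φ0 j).measurable.comp measurable_snd)).mul
        (measurable_enorm.comp (hFc.measurable.comp (measurable_fst.sub measurable_snd))))
    calc (∫⁻ x, (‖conv (LP (⇑φ0) j) F x‖₊ : ℝ≥0∞))
        ≤ ∫⁻ x, ∫⁻ y, (‖LP (⇑φ0) j y‖₊ : ℝ≥0∞) * (‖F (x - y)‖₊ : ℝ≥0∞) :=
          lintegral_mono hcpt
      _ = ∫⁻ y, ∫⁻ x, (‖LP (⇑φ0) j y‖₊ : ℝ≥0∞) * (‖F (x - y)‖₊ : ℝ≥0∞) := hswap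
      _ = ∫⁻ y, (‖LP (⇑φ0) j y‖₊ : ℝ≥0∞) * ∫⁻ x, (‖F (x - y)‖₊ : ℝ≥0∞) := by
          refine lintegral_congr fun y => ?_
          rw [lintegral_const_mul' _ _ ENNReal.coe_ne_top]
      _ = ∫⁻ y, (‖LP (⇑φ0) j y‖₊ : ℝ≥0∞) * ∫⁻ z, (‖F z‖₊ : ℝ≥0∞) := by
          refine lintegral_congr fun y => ?_
          rw [lintegral_sub_right_eq_self (fun z => (‖F z‖₊ : ℝ≥0∞)) y]
      _ = (∫⁻ y, (‖LP (⇑φ0) j y‖₊ : ℝ≥0∞)) * ∫⁻ z, (‖F z‖₊ : ℝ≥0∞) := by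
          rw [lintegral_mul_const' _ _]
          exact (lt_of_le_of_lt hFL1 (by finiteness)).ne
      _ ≤ ENNReal.ofReal A0 * (ENNReal.ofReal ε * (ENNReal.ofReal A0 + ENNReal.ofReal A0)) := by
          rw [hALPj]
          exact mul_le_mul_right hFL1 _
      _ ≤ M := by
          rw [hM, ← ENNReal.ofReal_add hA0nn hA0nn, ← ENNReal.ofReal_mul hεnn,
            ← ENNReal.ofReal_mul hA0nn]
          apply ENNReal.ofReal_le_ofReal
          nlinarith [mul_nonneg (mul_nonneg hA0nn hA0nn) hεnn, mul_nonneg (mul_nonneg hA0nn hC0nn) hεnn]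
  exact eLpNorm_le_of_bounds hd1 hptM hIM

lemma norm_e1 (hd : 0 < d) : ‖e1 d‖ = 1 := by
  have h : ∀ i : Fin d, e1 d i = if i = (⟨0, hd⟩ : Fin d) then (1:ℝ) else 0 := by
    intro i
    show (if (i:ℕ) = 0 then (1:ℝ) else 0) = _
    congr 1
    simp [Fin.ext_iff]
  rw [EuclideanSpace.norm_eq]
  have h2 : (∑ i, ‖e1 d i‖ ^ 2) = 1 := by
    rw [Finset.sum_congr rfl (fun i _ => by rw [h i])]
    simp
  rw [h2, Real.sqrt_one]

lemma continuous_x1 : Continuous fun x : Eu d => x1 x := by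
  unfold x1
  exact continuous_id.inner (𝕜 := ℝ) continuous_const

lemma abs_two_pow_sub {p q n : ℕ} (hp : n ≤ p) (hq : n ≤ q) (hpq : p ≠ q) :
    (2:ℝ)^n ≤ |(2:ℝ)^p - (2:ℝ)^q| := by
  wlog h : p < q generalizing p q
  · rw [abs_sub_comm]
    exact this hq hp (Ne.symm hpq) (by omega)
  have h1 : (2:ℝ)^(p+1) ≤ (2:ℝ)^q := pow_le_pow_right₀ one_le_two (by omega)
  have h2 : (2:ℝ)^n ≤ (2:ℝ)^p := pow_le_pow_right₀ one_le_two hp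
  rw [pow_succ] at h1
  rw [abs_of_neg (by nlinarith [pow_pos (by norm_num : (0:ℝ)<2) p])]
  nlinarith [pow_pos (by norm_num : (0:ℝ)<2) p]

lemma norm_shift_sub (hd : 0 < d) (N : ℕ) (j k : ℤ) :
    ‖shift d N j - shift d N k‖ =
      |(2:ℝ)^(j.natAbs + 2*N) - (2:ℝ)^(k.natAbs + 2*N)| := by
  rw [shift, shift, ← sub_smul, norm_smul, Real.norm_eq_abs, norm_e1 hd, mul_one]

lemma mem_jSet {δ : ℝ} {N : ℕ} {j : ℤ} (hj : j ∈ jSet δ N) :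
    -(δ * N) ≤ (j:ℝ) ∧ j ≤ 0 := by
  rw [jSet, Finset.mem_Icc] at hj
  exact ⟨Int.ceil_le.mp hj.1, hj.2⟩

lemma sep_bound (hd : 0 < d) {δ : ℝ} (hδ0 : 0 < δ) (hδ1 : δ < 1) {N : ℕ} (hN : 2 ≤ N)
    {j k : ℤ} (hj : j ∈ jSet δ N) (hk : k ∈ jSet δ N) (hjk : j ≠ k) :
    (2:ℝ)^((N:ℤ)-1) ≤ (2:ℝ)^j * (‖shift d N j - shift d N k‖ / 2) := by
  obtain ⟨hj1, hj2⟩ := mem_jSet hj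
  obtain ⟨hk1, hk2⟩ := mem_jSet hk
  have hNj : -(N:ℤ) ≤ j := by
    have hN0 : (0:ℝ) < N := by exact_mod_cast (by omega : 0 < N)
    have : -(N:ℝ) ≤ (j:ℝ) := by nlinarith
    exact_mod_cast this
  have hD : (2:ℝ)^(2*N) ≤ ‖shift d N j - shift d N k‖ := by
    rw [norm_shift_sub hd]
    exact abs_two_pow_sub (by omega) (by omega) (by omega)
  have h2j : (2:ℝ)^(-(N:ℤ)) ≤ (2:ℝ)^j := zpow_le_zpow_right₀ one_le_two hNj
  have key : (2:ℝ)^((N:ℤ)-1) = (2:ℝ)^(-(N:ℤ)) * ((2:ℝ)^(2*N) / 2) := by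
    rw [div_eq_mul_inv, ← zpow_neg_one (2:ℝ), ← zpow_natCast (2:ℝ) (2*N),
      ← zpow_add₀ (by norm_num : (2:ℝ) ≠ 0), ← zpow_add₀ (by norm_num : (2:ℝ) ≠ 0)]
    congr 1
    push_cast
    ring
  rw [key]
  exact mul_le_mul h2j (by linarith) (by positivity) (by positivity)

lemma weight_bound {δ : ℝ} (hδ0 : 0 < δ) {N : ℕ} {j k : ℤ}
    (hj1 : -(δ * N) ≤ (j:ℝ)) (hj2 : j ≤ 0) (hk1 : -(δ * N) ≤ (k:ℝ)) (hk2 : k ≤ 0) :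
    (2:ℝ)^(-j) * (2:ℝ)^(-((d:ℤ)-1)*j) * (2:ℝ)^(-((d:ℤ)-1)*k)
      ≤ (2:ℝ) ^ (2*(d:ℝ)*δ*N) := by
  have hcomb : (2:ℝ)^(-j) * (2:ℝ)^(-((d:ℤ)-1)*j) * (2:ℝ)^(-((d:ℤ)-1)*k)
      = (2:ℝ)^((-j) + (-((d:ℤ)-1)*j) + (-((d:ℤ)-1)*k)) := by
    rw [zpow_add₀ (by norm_num : (2:ℝ) ≠ 0), zpow_add₀ (by norm_num : (2:ℝ) ≠ 0)]
  rw [hcomb, ← Real.rpow_intCast (2:ℝ)]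
  apply Real.rpow_le_rpow_of_exponent_le one_le_two
  push_cast
  have hjr : (j:ℝ) ≤ 0 := by exact_mod_cast hj2
  have hkr : (k:ℝ) ≤ 0 := by exact_mod_cast hk2
  have hd0 : (0:ℝ) ≤ (d:ℝ) := Nat.cast_nonneg d
  have hδN : 0 ≤ δ * N := by positivity
  nlinarith [mul_le_mul_of_nonneg_left hj1 hd0, mul_le_mul_of_nonneg_left hk1 hd0,
    mul_nonneg hδN hd0]

lemma card_jSet_le {δ : ℝ} (hδ0 : 0 < δ) (hδ1 : δ < 1) {N : ℕ} (hN : 1 ≤ N) :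
    (jSet δ N).card ≤ 2 * N := by
  rw [jSet, Int.card_Icc]
  have h1 : (-(N:ℤ)) ≤ ⌈-(δ * N)⌉ := by
    have : ((-(N:ℤ) : ℤ) : ℝ) ≤ -(δ * N) := by
      push_cast
      have hN0 : (1:ℝ) ≤ N := by exact_mod_cast hN
      nlinarith
    calc (-(N:ℤ)) = ⌈((-(N:ℤ) : ℤ) : ℝ)⌉ := (Int.ceil_intCast _).symm
      _ ≤ ⌈-(δ * N)⌉ := Int.ceil_mono this
  omega

lemma final_ineq {d N : ℕ} (hd : 2 ≤ d) (hN : 2 ≤ N) {δ K2 : ℝ} (hδ0 : 0 < δ) (hδ1 : δ < 1)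
    (hK2 : 0 ≤ K2) :
    ((2*N : ℕ) : ℝ) * ((2*N : ℕ) : ℝ) *
        ((2:ℝ) ^ (2*(d:ℝ)*δ*N) * (K2 * ((2:ℝ) ^ ((3*(d:ℝ))*((N:ℝ)-1)))⁻¹))
      ≤ (4 * K2 * (2:ℝ) ^ (3*(d:ℝ)) + 1) * N * (2:ℝ) ^ (-((d:ℝ)*(1-δ)*N)) := by
  have hNpos : (0:ℝ) < N := by positivity
  have hNr : (2:ℝ) ≤ (N:ℝ) := by exact_mod_cast hN
  have hdr : (2:ℝ) ≤ (d:ℝ) := by exact_mod_cast hd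
  set P : ℝ := (2:ℝ) ^ (-((d:ℝ)*(1-δ)*N)) with hP
  have hPpos : 0 < P := Real.rpow_pos_of_pos two_pos _
  have hsplit : (2:ℝ) ^ (2*(d:ℝ)*δ*N) * ((2:ℝ) ^ ((3*(d:ℝ))*((N:ℝ)-1)))⁻¹
      = (2:ℝ) ^ (3*(d:ℝ)) * ((2:ℝ) ^ ((d:ℝ)*δ*N - 2*(d:ℝ)*N) * P) := by
    rw [hP, ← Real.rpow_neg (by norm_num : (0:ℝ) ≤ 2), ← Real.rpow_add two_pos,
      ← Real.rpow_add two_pos, ← Real.rpow_add two_pos]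
    congr 1
    ring
  have hB : (N:ℝ) * (2:ℝ) ^ ((d:ℝ)*δ*N - 2*(d:ℝ)*N) ≤ 1 := by
    have hexp : (d:ℝ)*δ*N - 2*(d:ℝ)*N ≤ -(N:ℝ) := by
      have hdN : (0:ℝ) ≤ (d:ℝ)*(N:ℝ) := by positivity
      have h1 : (d:ℝ)*δ*(N:ℝ) ≤ (d:ℝ)*(N:ℝ) := by
        nlinarith [mul_nonneg hdN (by linarith : (0:ℝ) ≤ 1 - δ)]
      have h2 : 2*(N:ℝ) ≤ (d:ℝ)*(N:ℝ) := by
        nlinarith [mul_le_mul_of_nonneg_right hdr hNpos.le]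
      linarith
    have h1 : (2:ℝ) ^ ((d:ℝ)*δ*N - 2*(d:ℝ)*N) ≤ (2:ℝ) ^ (-(N:ℝ)) :=
      Real.rpow_le_rpow_of_exponent_le one_le_two hexp
    have h2 : (N:ℝ) ≤ (2:ℝ) ^ ((N:ℝ)) := by
      rw [Real.rpow_natCast]
      exact_mod_cast (Nat.lt_two_pow_self (n := N)).le
    have h3 : (2:ℝ) ^ (-(N:ℝ)) = ((2:ℝ) ^ ((N:ℝ)))⁻¹ := by
      rw [← Real.rpow_neg (by norm_num : (0:ℝ) ≤ 2)]
    have hp : (0:ℝ) < (2:ℝ) ^ ((N:ℝ)) := Real.rpow_pos_of_pos two_pos _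
    calc (N:ℝ) * (2:ℝ) ^ ((d:ℝ)*δ*N - 2*(d:ℝ)*N) ≤ (N:ℝ) * (2:ℝ) ^ (-(N:ℝ)) :=
          mul_le_mul_of_nonneg_left h1 hNpos.le
      _ = (N:ℝ) / (2:ℝ)^((N:ℝ)) := by rw [h3, div_eq_mul_inv]
      _ ≤ 1 := (div_le_one hp).mpr h2
  have hcast : ((2*N : ℕ) : ℝ) = 2 * (N:ℝ) := by push_cast; ring
  rw [hcast]
  have h3dpos : (0:ℝ) < (2:ℝ) ^ (3*(d:ℝ)) := Real.rpow_pos_of_pos two_pos _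
  calc 2*(N:ℝ) * (2*(N:ℝ)) * ((2:ℝ) ^ (2*(d:ℝ)*δ*N) * (K2 * ((2:ℝ) ^ ((3*(d:ℝ))*((N:ℝ)-1)))⁻¹))
      = (4 * K2 * (2:ℝ) ^ (3*(d:ℝ))) * ((N:ℝ) * P) *
          ((N:ℝ) * (2:ℝ) ^ ((d:ℝ)*δ*N - 2*(d:ℝ)*N)) := by
        rw [show (2:ℝ) ^ (2*(d:ℝ)*δ*N) * (K2 * ((2:ℝ) ^ ((3*(d:ℝ))*((N:ℝ)-1)))⁻¹)
            = K2 * ((2:ℝ) ^ (2*(d:ℝ)*δ*N) * ((2:ℝ) ^ ((3*(d:ℝ))*((N:ℝ)-1)))⁻¹) by ring,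
          hsplit]
        ring
    _ ≤ (4 * K2 * (2:ℝ) ^ (3*(d:ℝ))) * ((N:ℝ) * P) * 1 := by
        refine mul_le_mul_of_nonneg_left hB ?_
        positivity
    _ ≤ (4 * K2 * (2:ℝ) ^ (3*(d:ℝ)) + 1) * N * P := by
        rw [mul_one]
        have : (4 * K2 * (2:ℝ) ^ (3*(d:ℝ))) ≤ 4 * K2 * (2:ℝ) ^ (3*(d:ℝ)) + 1 := by linarith
        calc (4 * K2 * (2:ℝ) ^ (3*(d:ℝ))) * ((N:ℝ) * P)
            ≤ (4 * K2 * (2:ℝ) ^ (3*(d:ℝ)) + 1) * ((N:ℝ) * P) := by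
              refine mul_le_mul_of_nonneg_right this (by positivity)
          _ = (4 * K2 * (2:ℝ) ^ (3*(d:ℝ)) + 1) * N * P := by ring


end AuxLemmas

/-- Lemma A.1, estimate (A.2). -/
theorem offdiagonal_estimate_one (d : ℕ) (hd : 2 ≤ d) (δ : ℝ) (hδ0 : 0 < δ) (hδ1 : δ < 1)
    (φ0 : SchwartzMap (Eu d) ℂ)
    (hsupp : Function.support (𝓕 ⇑φ0) ⊆ {ξ : Eu d | 1 / 2 ≤ ‖ξ‖ ∧ ‖ξ‖ ≤ 2})
    (hsum : ∀ ξ : Eu d, ξ ≠ 0 → HasSum (fun j : ℤ => 𝓕 (LP (⇑φ0) j) ξ) 1) :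
    ∃ C : ℝ, 0 < C ∧ ∀ N : ℕ, 2 ≤ N →
      ∑ j ∈ jSet δ N, ∑ k ∈ (jSet δ N).erase j,
          ENNReal.ofReal
              ((2 : ℝ) ^ (-j) * (2 : ℝ) ^ (-((d : ℤ) - 1) * j) *
                (2 : ℝ) ^ (-((d : ℤ) - 1) * k)) *
            eLpNorm
              (conv (LP (⇑φ0) j) fun x =>
                LP (⇑φ0) j (x - shift d N j) * LP (⇑φ0) k (x - shift d N k) *
                  ((Real.sin ((2 : ℝ) ^ N * x1 x) : ℝ) : ℂ) ^ 2)
              d volume ≤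
        ENNReal.ofReal (C * N * (2 : ℝ) ^ (-((d : ℝ) * (1 - δ) * N))) := by
  classical
  have hd1 : 1 ≤ d := by omega
  have hd0 : 0 < d := by omega
  obtain ⟨C0, hC0pos, hC0'⟩ := φ0.decay 0 0
  have hC0 : ∀ x, ‖φ0 x‖ ≤ C0 := fun x => by
    have := hC0' x
    rwa [pow_zero, one_mul, norm_iteratedFDeriv_zero] at this
  obtain ⟨C1, hC1pos, hC1'⟩ := φ0.decay (3*d) 0
  have hC1 : ∀ x, ‖x‖ ^ (3*d) * ‖φ0 x‖ ≤ C1 := fun x => by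
    have := hC1' x
    rwa [norm_iteratedFDeriv_zero] at this
  set A0 : ℝ := ∫ x, ‖φ0 x‖ with hA0
  have hA0nn : 0 ≤ A0 := integral_nonneg fun x => norm_nonneg _
  have hC0nn : 0 ≤ C0 := hC0pos.le
  have hC1nn : 0 ≤ C1 := hC1pos.le
  set K2 : ℝ := A0 * (2*C0 + 2*A0) * C1 with hK2
  have hK2nn : 0 ≤ K2 := by
    apply mul_nonneg (mul_nonneg hA0nn (by linarith)) hC1nn
  have h3dpos : (0:ℝ) < (2:ℝ) ^ (3*(d:ℝ)) := Real.rpow_pos_of_pos two_pos _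
  have hCpos : 0 < 4 * K2 * (2:ℝ) ^ (3*(d:ℝ)) + 1 := by
    have : 0 ≤ 4 * K2 * (2:ℝ) ^ (3*(d:ℝ)) := mul_nonneg (by linarith) h3dpos.le
    linarith
  refine ⟨4 * K2 * (2:ℝ) ^ (3*(d:ℝ)) + 1, hCpos, ?_⟩
  intro N hN
  set Br : ℝ := (2:ℝ) ^ (2*(d:ℝ)*δ*(N:ℝ)) * (K2 * ((2:ℝ) ^ ((3*(d:ℝ))*((N:ℝ)-1)))⁻¹) with hBr
  have hp1 : (0:ℝ) < (2:ℝ) ^ (2*(d:ℝ)*δ*(N:ℝ)) := Real.rpow_pos_of_pos two_pos _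
  have hp2 : (0:ℝ) < (2:ℝ) ^ ((3*(d:ℝ))*((N:ℝ)-1)) := Real.rpow_pos_of_pos two_pos _
  have hBrnn : 0 ≤ Br :=
    mul_nonneg hp1.le (mul_nonneg hK2nn (inv_nonneg.mpr hp2.le))
  have hscont : Continuous fun x : Eu d => ((Real.sin ((2:ℝ)^N * x1 x) : ℝ) : ℂ)^2 :=
    (Complex.continuous_ofReal.comp
      (Real.continuous_sin.comp (continuous_const.mul continuous_x1))).pow 2
  have hs1 : ∀ x : Eu d, ‖((Real.sin ((2:ℝ)^N * x1 x) : ℝ) : ℂ)^2‖ ≤ 1 := by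
    intro x
    rw [norm_pow, Complex.norm_real, Real.norm_eq_abs]
    refine pow_le_one₀ (abs_nonneg _) ?_
    exact abs_le.mpr ⟨Real.neg_one_le_sin _, Real.sin_le_one _⟩
  have key : ∀ j ∈ jSet δ N, ∀ k ∈ (jSet δ N).erase j,
      ENNReal.ofReal
          ((2 : ℝ) ^ (-j) * (2 : ℝ) ^ (-((d : ℤ) - 1) * j) *
            (2 : ℝ) ^ (-((d : ℤ) - 1) * k)) *
        eLpNorm
          (conv (LP (⇑φ0) j) fun x =>
            LP (⇑φ0) j (x - shift d N j) * LP (⇑φ0) k (x - shift d N k) *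
              ((Real.sin ((2 : ℝ) ^ N * x1 x) : ℝ) : ℂ) ^ 2)
          d volume ≤ ENNReal.ofReal Br := by
    intro j hj k hk'
    have hkS : k ∈ jSet δ N := Finset.mem_of_mem_erase hk'
    have hkj : k ≠ j := Finset.ne_of_mem_erase hk'
    obtain ⟨hj1, hj2⟩ := mem_jSet hj
    obtain ⟨hk1, hk2⟩ := mem_jSet hkS
    have hsj := sep_bound hd0 hδ0 hδ1 hN hj hkS hkj.symm
    have hsk : (2:ℝ)^((N:ℤ)-1) ≤ (2:ℝ)^k * (‖shift d N j - shift d N k‖/2) := by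
      have := sep_bound hd0 hδ0 hδ1 hN hkS hj hkj
      rwa [norm_sub_rev] at this
    have hr1 : (1:ℝ) ≤ (2:ℝ)^((N:ℤ)-1) := by
      have := zpow_le_zpow_right₀ (one_le_two (α := ℝ)) (show (0:ℤ) ≤ (N:ℤ)-1 by omega)
      simpa using this
    have hpair := pair_bound φ0 hd1 hC0 hC1 hA0 hj2 hk2 hr1 hsj hsk
      (fun x => ((Real.sin ((2:ℝ)^N * x1 x) : ℝ) : ℂ)^2) hscont hs1
    have hw := weight_bound (d := d) hδ0 hj1 hj2 hk1 hk2
    have hrm : ((2:ℝ)^((N:ℤ)-1)) ^ (3*d) = (2:ℝ) ^ ((3*(d:ℝ))*((N:ℝ)-1)) := by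
      rw [← Real.rpow_intCast (2:ℝ) ((N:ℤ)-1), ← Real.rpow_natCast _ (3*d),
        ← Real.rpow_mul (by norm_num : (0:ℝ) ≤ 2)]
      congr 1
      push_cast
      ring
    have hwnn : 0 ≤ (2 : ℝ) ^ (-j) * (2 : ℝ) ^ (-((d : ℤ) - 1) * j) *
        (2 : ℝ) ^ (-((d : ℤ) - 1) * k) := by positivity
    calc ENNReal.ofReal
          ((2 : ℝ) ^ (-j) * (2 : ℝ) ^ (-((d : ℤ) - 1) * j) *
            (2 : ℝ) ^ (-((d : ℤ) - 1) * k)) *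
        eLpNorm
          (conv (LP (⇑φ0) j) fun x =>
            LP (⇑φ0) j (x - shift d N j) * LP (⇑φ0) k (x - shift d N k) *
              ((Real.sin ((2 : ℝ) ^ N * x1 x) : ℝ) : ℂ) ^ 2)
          d volume
        ≤ ENNReal.ofReal
            ((2 : ℝ) ^ (-j) * (2 : ℝ) ^ (-((d : ℤ) - 1) * j) *
              (2 : ℝ) ^ (-((d : ℤ) - 1) * k)) *
          ENNReal.ofReal (A0 * (2*C0 + 2*A0) * (C1 / ((2:ℝ)^((N:ℤ)-1)) ^ (3*d))) :=
          mul_le_mul_right hpair _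
      _ = ENNReal.ofReal
            (((2 : ℝ) ^ (-j) * (2 : ℝ) ^ (-((d : ℤ) - 1) * j) *
              (2 : ℝ) ^ (-((d : ℤ) - 1) * k)) *
            (A0 * (2*C0 + 2*A0) * (C1 / ((2:ℝ)^((N:ℤ)-1)) ^ (3*d)))) :=
          (ENNReal.ofReal_mul hwnn).symm
      _ ≤ ENNReal.ofReal Br := by
          apply ENNReal.ofReal_le_ofReal
          rw [hBr]
          have heq : A0 * (2*C0 + 2*A0) * (C1 / ((2:ℝ)^((N:ℤ)-1)) ^ (3*d))
              = K2 * ((2:ℝ) ^ ((3*(d:ℝ))*((N:ℝ)-1)))⁻¹ := by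
            rw [hK2, ← hrm, div_eq_mul_inv]
            ring
          rw [heq]
          have hTnn : 0 ≤ K2 * ((2:ℝ) ^ ((3*(d:ℝ))*((N:ℝ)-1)))⁻¹ :=
            mul_nonneg hK2nn (inv_nonneg.mpr hp2.le)
          exact mul_le_mul_of_nonneg_right hw hTnn
  have hcard : (jSet δ N).card ≤ 2 * N := card_jSet_le hδ0 hδ1 (by omega)
  calc ∑ j ∈ jSet δ N, ∑ k ∈ (jSet δ N).erase j,
        ENNReal.ofReal
            ((2 : ℝ) ^ (-j) * (2 : ℝ) ^ (-((d : ℤ) - 1) * j) *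
              (2 : ℝ) ^ (-((d : ℤ) - 1) * k)) *
          eLpNorm
            (conv (LP (⇑φ0) j) fun x =>
              LP (⇑φ0) j (x - shift d N j) * LP (⇑φ0) k (x - shift d N k) *
                ((Real.sin ((2 : ℝ) ^ N * x1 x) : ℝ) : ℂ) ^ 2)
            d volume
      ≤ ∑ j ∈ jSet δ N, ∑ _k ∈ (jSet δ N).erase j, ENNReal.ofReal Br :=
        Finset.sum_le_sum fun j hj => Finset.sum_le_sum fun k hk => key j hj k hk
    _ = ∑ j ∈ jSet δ N, (((jSet δ N).erase j).card : ℝ≥0∞) * ENNReal.ofReal Br := by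
        simp [Finset.sum_const, nsmul_eq_mul]
    _ ≤ ∑ _j ∈ jSet δ N, ((2*N : ℕ) : ℝ≥0∞) * ENNReal.ofReal Br := by
        refine Finset.sum_le_sum fun j hj => ?_
        refine mul_le_mul_left ?_ _
        exact_mod_cast le_trans (Finset.card_erase_le) hcard
    _ = ((jSet δ N).card : ℝ≥0∞) * (((2*N : ℕ) : ℝ≥0∞) * ENNReal.ofReal Br) := by
        simp [Finset.sum_const, nsmul_eq_mul]
    _ ≤ ((2*N : ℕ) : ℝ≥0∞) * (((2*N : ℕ) : ℝ≥0∞) * ENNReal.ofReal Br) := by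
        refine mul_le_mul_left ?_ _
        exact_mod_cast hcard
    _ = ENNReal.ofReal (((2*N : ℕ) : ℝ) * (((2*N : ℕ) : ℝ) * Br)) := by
        rw [ENNReal.ofReal_mul (Nat.cast_nonneg _), ENNReal.ofReal_mul (Nat.cast_nonneg _),
          ENNReal.ofReal_natCast]
    _ ≤ ENNReal.ofReal ((4 * K2 * (2:ℝ) ^ (3*(d:ℝ)) + 1) * N *
          (2 : ℝ) ^ (-((d : ℝ) * (1 - δ) * N))) := by
        apply ENNReal.ofReal_le_ofReal
        have := final_ineq hd hN hδ0 hδ1 hK2nn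
        calc ((2*N : ℕ) : ℝ) * (((2*N : ℕ) : ℝ) * Br)
            = ((2*N : ℕ) : ℝ) * ((2*N : ℕ) : ℝ) * Br := by ring
          _ ≤ _ := this

end Paper
end
end

section
/- There exists a constant C > 0 such that for every integer k ≥ 2: (1/(k−1)) Σ_{k_1=1}^{k−1} k_1 (k − k_1) (1 + k_1)^{−4} (1 + (k − k_1))^{−4} ≤ C (1 + k)^{−4}. -/
noncomputable section

open MeasureTheory Real Filter
open scoped FourierTransform ENNReal BigOperators

namespace Paper

lemma telesc (N : ℕ) : ∑ n ∈ Finset.range N, (((2:ℝ)+(n:ℝ))^3)⁻¹ ≤ 1 - ((N:ℝ)+1)⁻¹ := by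
  induction N with
  | zero => norm_num
  | succ N ih =>
    rw [Finset.sum_range_succ]
    have hN : (0:ℝ) ≤ (N:ℝ) := Nat.cast_nonneg N
    have h1 : (((2:ℝ)+(N:ℝ))^3)⁻¹ ≤ ((N:ℝ)+1)⁻¹ - ((N:ℝ)+2)⁻¹ := by
      have e : ((N:ℝ)+1)⁻¹ - ((N:ℝ)+2)⁻¹ = (((N:ℝ)+1)*((N:ℝ)+2))⁻¹ := by
        field_simp; ring
      rw [e]
      apply inv_anti₀ (by positivity)
      nlinarith [mul_nonneg hN hN, mul_nonneg (mul_nonneg hN hN) hN]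
    push_cast
    have e2 : ((N:ℝ)+1+1) = (N:ℝ)+2 := by ring
    rw [e2]
    linarith

lemma telesc' (N : ℕ) : ∑ n ∈ Finset.range N, (((2:ℝ)+(n:ℝ))^3)⁻¹ ≤ 1 := by
  have h := telesc N
  have : (0:ℝ) ≤ ((N:ℝ)+1)⁻¹ := by positivity
  linarith

lemma sumg (k : ℕ) (hk : 2 ≤ k) :
    ∑ k1 ∈ Finset.Ioo 0 k, ((1+(k1:ℝ))^3)⁻¹ ≤ 1 := by
  have : Finset.Ioo 0 k = Finset.Ico 1 k := rfl
  rw [this, Finset.sum_Ico_eq_sum_range]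
  calc ∑ n ∈ Finset.range (k-1), ((1+((1+n:ℕ):ℝ))^3)⁻¹
      = ∑ n ∈ Finset.range (k-1), (((2:ℝ)+(n:ℝ))^3)⁻¹ := by
        apply Finset.sum_congr rfl; intro n _; push_cast; ring_nf
    _ ≤ 1 := telesc' _

lemma sumg' (k : ℕ) (hk : 2 ≤ k) :
    ∑ k1 ∈ Finset.Ioo 0 k, ((1+((k-k1:ℕ):ℝ))^3)⁻¹ ≤ 1 := by
  have h0 : Finset.Ioo 0 k = Finset.Ico 1 k := rfl
  rw [h0, Finset.sum_Ico_eq_sum_range]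
  have e : ∀ n ∈ Finset.range (k-1), ((1+((k-(1+n):ℕ):ℝ))^3)⁻¹
      = (fun j => ((1+((1+j:ℕ):ℝ))^3)⁻¹) ((k-1) - 1 - n) := by
    intro n hn
    have hn' : n < k - 1 := Finset.mem_range.mp hn
    have h2 : k - (1+n) = 1 + (k - 1 - 1 - n) := by omega
    rw [h2]
  rw [Finset.sum_congr rfl e,
    Finset.sum_range_reflect (fun j => ((1+((1+j:ℕ):ℝ))^3)⁻¹) (k-1)]
  calc ∑ n ∈ Finset.range (k-1), ((1+((1+n:ℕ):ℝ))^3)⁻¹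
      = ∑ n ∈ Finset.range (k-1), (((2:ℝ)+(n:ℝ))^3)⁻¹ := by
        apply Finset.sum_congr rfl; intro n _; push_cast; ring_nf
    _ ≤ 1 := telesc' _

/-- inequality (3.8): the combinatorial convolution estimate
`(k-1)⁻¹ Σ_{k₁+k₂=k} k₁k₂(1+k₁)⁻⁴(1+k₂)⁻⁴ ≤ C (1+k)⁻⁴`. -/
theorem combinatorial_convolution_bound :
    ∃ C : ℝ, 0 < C ∧ ∀ k : ℕ, 2 ≤ k →
      (1 / ((k : ℝ) - 1)) *
          ∑ k1 ∈ Finset.Ioo 0 k,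
            (k1 : ℝ) * ((k - k1 : ℕ) : ℝ) * ((1 : ℝ) + (k1 : ℝ)) ^ (-(4 : ℤ)) *
              ((1 : ℝ) + ((k - k1 : ℕ) : ℝ)) ^ (-(4 : ℤ)) ≤
        C * ((1 : ℝ) + (k : ℝ)) ^ (-(4 : ℤ)) := by
  refine ⟨100, by norm_num, fun k hk => ?_⟩
  have hk2 : (2:ℝ) ≤ (k:ℝ) := by exact_mod_cast hk
  have hkpos : (0:ℝ) < (k:ℝ) - 1 := by linarith
  have hk3 : (0:ℝ) < 1+(k:ℝ) := by linarith
  simp only [zpow_neg, show ((4:ℤ)) = ((4:ℕ):ℤ) from rfl, zpow_natCast]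
  have hterm : ∀ k1 ∈ Finset.Ioo 0 k,
      (k1:ℝ) * ((k-k1:ℕ):ℝ) * (((1:ℝ)+(k1:ℝ))^4)⁻¹ * (((1:ℝ)+((k-k1:ℕ):ℝ))^4)⁻¹
        ≤ 8 * ((1+(k:ℝ))^3)⁻¹ * (((1+(k1:ℝ))^3)⁻¹ + ((1+((k-k1:ℕ):ℝ))^3)⁻¹) := by
    intro k1 hk1
    obtain ⟨h0, hlt⟩ := Finset.mem_Ioo.mp hk1
    set a : ℝ := (k1:ℝ) with ha
    set b : ℝ := ((k-k1:ℕ):ℝ) with hb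
    have ha1 : (1:ℝ) ≤ a := by rw [ha]; exact_mod_cast h0
    have hb1 : (1:ℝ) ≤ b := by
      rw [hb]
      have : 1 ≤ k - k1 := by omega
      exact_mod_cast this
    have hab : a + b = (k:ℝ) := by
      rw [ha, hb]
      have : k1 + (k - k1) = k := by omega
      push_cast [this]
      exact_mod_cast congrArg (Nat.cast (R := ℝ)) this
    have hA : (0:ℝ) < 1+a := by linarith
    have hB : (0:ℝ) < 1+b := by linarith
    have key : a * b * (((1:ℝ)+a)^4)⁻¹ * (((1:ℝ)+b)^4)⁻¹
        ≤ ((1+a)^3)⁻¹ * ((1+b)^3)⁻¹ := by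
      have e1 : a * b * (((1:ℝ)+a)^4)⁻¹ * (((1:ℝ)+b)^4)⁻¹
          = (a*b) / ((1+a)^4 * (1+b)^4) := by
        field_simp
      have e2 : ((1+a)^3)⁻¹ * ((1+b)^3)⁻¹ = 1 / ((1+a)^3 * (1+b)^3) := by
        field_simp
      rw [e1, e2, div_le_div_iff₀ (by positivity) (by positivity)]
      nlinarith [mul_pos hA hB, pow_pos hA 3, pow_pos hB 3,
        mul_pos (pow_pos hA 3) (pow_pos hB 3),
        mul_le_mul (by linarith : a ≤ 1+a) (by linarith : b ≤ 1+b) (by linarith) (by linarith),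
        mul_nonneg (le_of_lt (mul_pos (pow_pos hA 3) (pow_pos hB 3)))
          (by nlinarith : (0:ℝ) ≤ (1+a)*(1+b) - a*b)]
    have hginv : ∀ x : ℝ, 0 < x → 1+(k:ℝ) ≤ 2*x → (x^3)⁻¹ ≤ 8 * ((1+(k:ℝ))^3)⁻¹ := by
      intro x hx hle
      have h1 : (1:ℝ)/x^3 ≤ 8/((1+(k:ℝ))^3) := by
        rw [div_le_div_iff₀ (by positivity) (by positivity)]
        have hp : (1+(k:ℝ))^3 ≤ (2*x)^3 := pow_le_pow_left₀ (by linarith) hle 3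
        nlinarith [hp]
      simpa [one_div, div_eq_mul_inv] using h1
    have hgb : (0:ℝ) ≤ ((1+b)^3)⁻¹ := by positivity
    have hga : (0:ℝ) ≤ ((1+a)^3)⁻¹ := by positivity
    rcases le_total a b with hcase | hcase
    · have h2 : ((1+b)^3)⁻¹ ≤ 8 * ((1+(k:ℝ))^3)⁻¹ := hginv (1+b) hB (by linarith)
      calc a * b * (((1:ℝ)+a)^4)⁻¹ * (((1:ℝ)+b)^4)⁻¹
          ≤ ((1+a)^3)⁻¹ * ((1+b)^3)⁻¹ := key
        _ ≤ ((1+a)^3)⁻¹ * (8 * ((1+(k:ℝ))^3)⁻¹) := by gcongr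
        _ ≤ 8 * ((1+(k:ℝ))^3)⁻¹ * (((1+a)^3)⁻¹ + ((1+b)^3)⁻¹) := by nlinarith [mul_nonneg hgb (by positivity : (0:ℝ) ≤ 8 * ((1+(k:ℝ))^3)⁻¹)]
    · have h2 : ((1+a)^3)⁻¹ ≤ 8 * ((1+(k:ℝ))^3)⁻¹ := hginv (1+a) hA (by linarith)
      calc a * b * (((1:ℝ)+a)^4)⁻¹ * (((1:ℝ)+b)^4)⁻¹
          ≤ ((1+a)^3)⁻¹ * ((1+b)^3)⁻¹ := key
        _ ≤ (8 * ((1+(k:ℝ))^3)⁻¹) * ((1+b)^3)⁻¹ := by gcongr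
        _ ≤ 8 * ((1+(k:ℝ))^3)⁻¹ * (((1+a)^3)⁻¹ + ((1+b)^3)⁻¹) := by nlinarith [mul_nonneg hga (by positivity : (0:ℝ) ≤ 8 * ((1+(k:ℝ))^3)⁻¹)]
  have hsum : ∑ k1 ∈ Finset.Ioo 0 k,
      (k1:ℝ) * ((k-k1:ℕ):ℝ) * (((1:ℝ)+(k1:ℝ))^4)⁻¹ * (((1:ℝ)+((k-k1:ℕ):ℝ))^4)⁻¹
      ≤ 16 * ((1+(k:ℝ))^3)⁻¹ := by
    calc ∑ k1 ∈ Finset.Ioo 0 k,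
        (k1:ℝ) * ((k-k1:ℕ):ℝ) * (((1:ℝ)+(k1:ℝ))^4)⁻¹ * (((1:ℝ)+((k-k1:ℕ):ℝ))^4)⁻¹
        ≤ ∑ k1 ∈ Finset.Ioo 0 k,
            8 * ((1+(k:ℝ))^3)⁻¹ * (((1+(k1:ℝ))^3)⁻¹ + ((1+((k-k1:ℕ):ℝ))^3)⁻¹) :=
          Finset.sum_le_sum hterm
      _ = 8 * ((1+(k:ℝ))^3)⁻¹ *
          ((∑ k1 ∈ Finset.Ioo 0 k, ((1+(k1:ℝ))^3)⁻¹) +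
            ∑ k1 ∈ Finset.Ioo 0 k, ((1+((k-k1:ℕ):ℝ))^3)⁻¹) := by
          rw [← Finset.mul_sum, Finset.sum_add_distrib]
      _ ≤ 8 * ((1+(k:ℝ))^3)⁻¹ * (1 + 1) :=
          mul_le_mul_of_nonneg_left (add_le_add (sumg k hk) (sumg' k hk)) (by positivity)
      _ = 16 * ((1+(k:ℝ))^3)⁻¹ := by ring
  calc (1/((k:ℝ)-1)) * ∑ k1 ∈ Finset.Ioo 0 k,
      (k1:ℝ) * ((k-k1:ℕ):ℝ) * (((1:ℝ)+(k1:ℝ))^4)⁻¹ * (((1:ℝ)+((k-k1:ℕ):ℝ))^4)⁻¹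
      ≤ (1/((k:ℝ)-1)) * (16 * ((1+(k:ℝ))^3)⁻¹) := by
        apply mul_le_mul_of_nonneg_left hsum (by positivity)
    _ ≤ 100 * (((1:ℝ)+(k:ℝ))^4)⁻¹ := by
        have e : (1/((k:ℝ)-1)) * (16 * ((1+(k:ℝ))^3)⁻¹)
            = 16 / (((k:ℝ)-1) * (1+(k:ℝ))^3) := by
          field_simp
        have e2 : (100:ℝ) * (((1:ℝ)+(k:ℝ))^4)⁻¹ = 100 / ((1+(k:ℝ))^4) := by
          rw [div_eq_mul_inv]
        rw [e, e2, div_le_div_iff₀ (by positivity) (by positivity)]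
        nlinarith [mul_nonneg (by linarith : (0:ℝ) ≤ 3*((k:ℝ)-1)-(1+(k:ℝ)))
          (le_of_lt (pow_pos hk3 3)),
          mul_nonneg (by linarith : (0:ℝ) ≤ (k:ℝ)-1) (le_of_lt (pow_pos hk3 3))]


end Paper
end
end
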